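/- For every base B: if ⊩−_B ⊤ then ⊩+_B χ and ⊩−_B χ for every formula χ. -/

import Mathlib

/-- Signs: `pos` for proof/assertion, `neg` for refutation/rejection. -/
inductive Sign where
  | pos
  | neg
deriving DecidableEq

/-- The dual of a sign. -/
def Sign.dual : Sign → Sign
  | .pos => .neg
  | .neg => .pos

/-- Formulas of the bilateral logic 2Int. -/
inductive Form where
  | atom : ℕ → Form
  | bot : Form
  | top : Form
  | and : Form → Form → Form
  | or : Form → Form → Form
  | imp : Form → Form → Form
  | coimp : Form → Form → Form
deriving DecidableEq

/-- A premise of an atomic rule: the sign required (proof or refutation), the premise atom,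
and the sets of dischargeable atomic proof assumptions and refutation assumptions. -/
structure Premise where
  sign : Sign
  concl : ℕ
  dischargePf : Set ℕ
  dischargeRf : Set ℕ

/-- An atomic rule: a list of premises, a marking as proof (`pos`) or refutation (`neg`) rule,
and an atomic conclusion. -/
structure AtomicRule where
  prems : List Premise
  sign : Sign
  concl : ℕ

/-- A bilateral atomic system (base) is a set of atomic rules. -/
abbrev Base := Set AtomicRule

/-- `AtDeriv B s Γ Δ p` formalizes `Γ;Δ ⊢^s_B p`: there is a deduction in `B` of the atom `p`
whose open atomic proof assumptions are contained in `Γ` and open atomic refutation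
assumptions in `Δ`, consisting of a single assumption of sign `s` or ending with a rule of
sign `s`. -/
inductive AtDeriv (B : Base) : Sign → Set ℕ → Set ℕ → ℕ → Prop
  | hypPos {Γ Δ : Set ℕ} {p : ℕ} : p ∈ Γ → AtDeriv B .pos Γ Δ p
  | hypNeg {Γ Δ : Set ℕ} {p : ℕ} : p ∈ Δ → AtDeriv B .neg Γ Δ p
  | app {Γ Δ : Set ℕ} {R : AtomicRule} (hR : R ∈ B)
      (h : ∀ pr ∈ R.prems,
        AtDeriv B pr.sign (Γ ∪ pr.dischargePf) (Δ ∪ pr.dischargeRf) pr.concl) :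
      AtDeriv B R.sign Γ Δ R.concl

/-- Bilateral validity (support) `⊩^s_B φ`, by recursion on the formula. -/
def Supp : Form → Base → Sign → Prop
  | .atom p, B, s => AtDeriv B s ∅ ∅ p
  | .bot, B, .pos => ∀ p : ℕ, AtDeriv B .pos ∅ ∅ p ∧ AtDeriv B .neg ∅ ∅ p
  | .bot, _, .neg => True
  | .top, _, .pos => True
  | .top, B, .neg => ∀ p : ℕ, AtDeriv B .pos ∅ ∅ p ∧ AtDeriv B .neg ∅ ∅ p
  | .and φ ψ, B, .pos => Supp φ B .pos ∧ Supp ψ B .pos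
  | .and φ ψ, B, .neg => ∀ C : Base, B ⊆ C → ∀ p : ℕ,
      (((∀ D : Base, C ⊆ D → Supp φ D .neg → AtDeriv D .pos ∅ ∅ p) ∧
        (∀ D : Base, C ⊆ D → Supp ψ D .neg → AtDeriv D .pos ∅ ∅ p)) →
        AtDeriv C .pos ∅ ∅ p) ∧
      (((∀ D : Base, C ⊆ D → Supp φ D .neg → AtDeriv D .neg ∅ ∅ p) ∧
        (∀ D : Base, C ⊆ D → Supp ψ D .neg → AtDeriv D .neg ∅ ∅ p)) →
        AtDeriv C .neg ∅ ∅ p)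
  | .or φ ψ, B, .pos => ∀ C : Base, B ⊆ C → ∀ p : ℕ,
      (((∀ D : Base, C ⊆ D → Supp φ D .pos → AtDeriv D .pos ∅ ∅ p) ∧
        (∀ D : Base, C ⊆ D → Supp ψ D .pos → AtDeriv D .pos ∅ ∅ p)) →
        AtDeriv C .pos ∅ ∅ p) ∧
      (((∀ D : Base, C ⊆ D → Supp φ D .pos → AtDeriv D .neg ∅ ∅ p) ∧
        (∀ D : Base, C ⊆ D → Supp ψ D .pos → AtDeriv D .neg ∅ ∅ p)) →
        AtDeriv C .neg ∅ ∅ p)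
  | .or φ ψ, B, .neg => Supp φ B .neg ∧ Supp ψ B .neg
  | .imp φ ψ, B, .pos => ∀ C : Base, B ⊆ C → Supp φ C .pos → Supp ψ C .pos
  | .imp φ ψ, B, .neg => Supp φ B .pos ∧ Supp ψ B .neg
  | .coimp φ ψ, B, .pos => Supp φ B .pos ∧ Supp ψ B .neg
  | .coimp φ ψ, B, .neg => ∀ C : Base, B ⊆ C → Supp ψ C .neg → Supp φ C .neg

lemma AtDeriv.mono {B C : Base} {s : Sign} {Γ Δ : Set ℕ} {p : ℕ} (h : AtDeriv B s Γ Δ p)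
    (hBC : B ⊆ C) : AtDeriv C s Γ Δ p := by
  induction h with
  | hypPos h => exact .hypPos h
  | hypNeg h => exact .hypNeg h
  | app hR _ ih => exact .app (hBC hR) ih

/-- This is what `⊩−_B ⊤` and `⊩+_B ⊥` unfold to. -/
def Base.Inconsistent (B : Base) : Prop :=
  ∀ p : ℕ, AtDeriv B .pos ∅ ∅ p ∧ AtDeriv B .neg ∅ ∅ p

lemma Base.Inconsistent.mono {B C : Base} (hB : B.Inconsistent) (hBC : B ⊆ C) :
    C.Inconsistent :=
  fun p => ⟨(hB p).1.mono hBC, (hB p).2.mono hBC⟩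

lemma Base.Inconsistent.atDeriv {B : Base} (hB : B.Inconsistent) (s : Sign) (p : ℕ) :
    AtDeriv B s ∅ ∅ p := by
  cases s
  exacts [(hB p).1, (hB p).2]

/-- Every clause of `Supp` either asks for atomic derivations, which an inconsistent base
supplies, or for support of subformulas in extensions, which are again inconsistent. -/
theorem Base.Inconsistent.supp {B : Base} (hB : B.Inconsistent) (χ : Form) (s : Sign) :
    Supp χ B s := by
  induction χ generalizing B s with
  | atom p => exact hB.atDeriv s p
  | bot =>
    cases s
    exacts [hB, trivial]
  | top =>
    cases s
    exacts [trivial, hB]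
  | and φ ψ ihφ ihψ =>
    cases s
    · exact ⟨ihφ hB .pos, ihψ hB .pos⟩
    · exact fun C hBC p => ⟨fun _ => (hB.mono hBC).atDeriv .pos p,
        fun _ => (hB.mono hBC).atDeriv .neg p⟩
  | or φ ψ ihφ ihψ =>
    cases s
    · exact fun C hBC p => ⟨fun _ => (hB.mono hBC).atDeriv .pos p,
        fun _ => (hB.mono hBC).atDeriv .neg p⟩
    · exact ⟨ihφ hB .neg, ihψ hB .neg⟩
  | imp φ ψ ihφ ihψ =>
    cases s
    · exact fun C hBC _ => ihψ (hB.mono hBC) .pos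
    · exact ⟨ihφ hB .pos, ihψ hB .neg⟩
  | coimp φ ψ ihφ ihψ =>
    cases s
    · exact ⟨ihφ hB .pos, ihψ hB .neg⟩
    · exact fun C hBC _ => ihφ (hB.mono hBC) .neg

theorem ex_falso_top (B : Base) (h : Supp .top B .neg) (χ : Form) :
    Supp χ B .pos ∧ Supp χ B .neg :=
  have hB : B.Inconsistent := h
  ⟨hB.supp χ .pos, hB.supp χ .neg⟩
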